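/- arXiv:1811.03125 — 3 statements merged into one kernel-verified Lean document; each statement's English description precedes it below -/
import Mathlib

section
/- For any random vectors x ∈ L²(Ω, ℝ^m) and z ∈ L²(Ω, ℝ^n), the covariance matrices satisfy E_{xz} (E_{zz})^† E_{zz} = E_{xz}. -/
open MeasureTheory Matrix Finset Filter

noncomputable section

/-- The covariance matrix `E_{xy}` of two random vectors. -/
def covM {Ω : Type} [MeasurableSpace Ω] (μ : Measure Ω) {m n : ℕ}
    (x : Ω → Fin m → ℝ) (y : Ω → Fin n → ℝ) : Matrix (Fin m) (Fin n) ℝ :=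
  Matrix.of fun i j => ∫ ω, x ω i * y ω j ∂μ

/-- The squared norm `‖x‖²_Ω` of a random vector. -/
def sqnormOm {Ω : Type} [MeasurableSpace Ω] (μ : Measure Ω) {m : ℕ}
    (x : Ω → Fin m → ℝ) : ℝ :=
  ∫ ω, ∑ j, (x ω j) ^ 2 ∂μ

/-- The Moore–Penrose conditions. -/
def IsMoorePenrose {m n : ℕ} (A : Matrix (Fin m) (Fin n) ℝ)
    (B : Matrix (Fin n) (Fin m) ℝ) : Prop :=
  A * B * A = A ∧ B * A * B = B ∧ (A * B)ᵀ = A * B ∧ (B * A)ᵀ = B * A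

/-- The Moore–Penrose pseudoinverse `M^†`. -/
def mpinv {m n : ℕ} (A : Matrix (Fin m) (Fin n) ℝ) : Matrix (Fin n) (Fin m) ℝ :=
  Classical.epsilon fun B => IsMoorePenrose A B

/-- The symmetric positive semidefinite square root `M^{1/2}` of a PSD matrix. -/
def msqrtM {n : ℕ} (M : Matrix (Fin n) (Fin n) ℝ) : Matrix (Fin n) (Fin n) ℝ :=
  Classical.epsilon fun S => S.PosSemidef ∧ S * S = M

/-- Squared Frobenius norm. -/
def frobSq {m n : ℕ} (A : Matrix (Fin m) (Fin n) ℝ) : ℝ := ∑ i, ∑ j, (A i j) ^ 2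

/-- `(u, v, σ)` is a singular value decomposition of `A`:
`A = ∑ k σ_k u_k v_kᵀ` with orthonormal `u`'s and `v`'s and
nonnegative singular values in decreasing order. -/
def IsSVDOf {m n : ℕ} (A : Matrix (Fin m) (Fin n) ℝ)
    (u : ℕ → Fin m → ℝ) (v : ℕ → Fin n → ℝ) (σ : ℕ → ℝ) : Prop :=
  (∀ k l, k < min m n → l < min m n → u k ⬝ᵥ u l = if k = l then (1 : ℝ) else 0) ∧
  (∀ k l, k < min m n → l < min m n → v k ⬝ᵥ v l = if k = l then (1 : ℝ) else 0) ∧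
  (∀ k, 0 ≤ σ k) ∧ Antitone σ ∧ (∀ k, min m n ≤ k → σ k = 0) ∧
  A = ∑ k ∈ Finset.range (min m n), σ k • vecMulVec (u k) (v k)

/-!
The kernel of `E_zz` is contained in that of `E_xz`: if `E_zz v = 0` then
`E[(z·v)²] = vᵀ E_zz v = 0`, so `z·v = 0` almost surely and `E_xz v = E[x (z·v)] = 0`.
Any `B` with `E_zz B E_zz = E_zz` makes every column of `B E_zz - 1` a kernel vector of `E_zz`,
hence of `E_xz`, which is the claim. The pseudoinverse of the symmetric matrix `E_zz` exists by
the spectral theorem: conjugating by an orthogonal matrix preserves the Moore–Penrose conditions,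
and a diagonal matrix has the entrywise inverse (with `0⁻¹ = 0`) as pseudoinverse.
-/

namespace Matrix

theorem mul_mul_eq_of_mulVec_eq_zero {R l m n : Type*} [Ring R] [Fintype m] [Fintype n]
    [DecidableEq n] {A : Matrix m n R} {B : Matrix n m R} {C : Matrix l n R}
    (hABA : A * B * A = A) (hker : ∀ v, A *ᵥ v = 0 → C *ᵥ v = 0) :
    C * B * A = C := by
  have hA : A * (B * A - 1) = 0 := by
    rw [Matrix.mul_sub, ← Matrix.mul_assoc, hABA, Matrix.mul_one, sub_self]
  have hC : C * (B * A - 1) = 0 := by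
    ext i j
    exact congrFun (hker _ (funext fun i' => congrFun₂ hA i' j)) i
  rwa [Matrix.mul_sub, Matrix.mul_one, sub_eq_zero, ← Matrix.mul_assoc] at hC

end Matrix

theorem IsMoorePenrose.map {n : ℕ} {A B : Matrix (Fin n) (Fin n) ℝ} (h : IsMoorePenrose A B)
    (φ : Matrix (Fin n) (Fin n) ℝ ≃⋆ₐ[ℝ] Matrix (Fin n) (Fin n) ℝ) :
    IsMoorePenrose (φ A) (φ B) := by
  obtain ⟨hABA, hBAB, hAB, hBA⟩ := h
  simp only [IsMoorePenrose, ← conjTranspose_eq_transpose_of_trivial, ← star_eq_conjTranspose,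
    ← map_mul, ← map_star] at *
  rw [hABA, hBAB, hAB, hBA]
  exact ⟨rfl, rfl, rfl, rfl⟩

theorem isMoorePenrose_diagonal {n : ℕ} (d : Fin n → ℝ) :
    IsMoorePenrose (diagonal d) (diagonal d⁻¹) := by
  simpa [IsMoorePenrose, diagonal_mul_diagonal] using fun i => mul_inv_mul_cancel (d i)⁻¹

theorem Matrix.IsHermitian.exists_isMoorePenrose {n : ℕ} {A : Matrix (Fin n) (Fin n) ℝ}
    (hA : A.IsHermitian) : ∃ B, IsMoorePenrose A B := by
  rw [hA.spectral_theorem]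
  exact ⟨_, (isMoorePenrose_diagonal _).map _⟩

theorem Matrix.IsHermitian.isMoorePenrose_mpinv {n : ℕ} {A : Matrix (Fin n) (Fin n) ℝ}
    (hA : A.IsHermitian) : IsMoorePenrose A (mpinv A) :=
  Classical.epsilon_spec hA.exists_isMoorePenrose

section Covariance

variable {Ω : Type} [MeasurableSpace Ω] {μ : Measure Ω} {m n : ℕ}
  {x : Ω → Fin m → ℝ} {y : Ω → Fin n → ℝ} {z : Ω → Fin n → ℝ}

theorem covM_self_isHermitian (μ : Measure Ω) (z : Ω → Fin n → ℝ) :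
    (covM μ z z).IsHermitian := by
  ext i j
  simp [covM, mul_comm]

theorem MeasureTheory.MemLp.dotProduct_const (hy : MemLp y 2 μ) (v : Fin n → ℝ) :
    MemLp (fun ω => y ω ⬝ᵥ v) 2 μ :=
  memLp_finsetSum _ fun j _ => (hy.eval j).mul_const (v j)

theorem covM_mulVec_apply (hx : MemLp x 2 μ) (hy : MemLp y 2 μ) (v : Fin n → ℝ) (i : Fin m) :
    (covM μ x y *ᵥ v) i = ∫ ω, x ω i * (y ω ⬝ᵥ v) ∂μ := by
  simp only [mulVec, dotProduct, covM, of_apply, Finset.mul_sum, ← integral_mul_const]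
  have hint (j : Fin n) : Integrable (fun ω => x ω i * y ω j) μ :=
    (hx.eval i).integrable_mul (hy.eval j)
  rw [← integral_finsetSum _ fun j _ => (hint j).mul_const (v j)]
  simp only [mul_assoc]

theorem dotProduct_covM_mulVec (hx : MemLp x 2 μ) (hy : MemLp y 2 μ) (w : Fin m → ℝ)
    (v : Fin n → ℝ) :
    w ⬝ᵥ (covM μ x y *ᵥ v) = ∫ ω, (x ω ⬝ᵥ w) * (y ω ⬝ᵥ v) ∂μ := by
  have hint (i : Fin m) : Integrable (fun ω => x ω i * (y ω ⬝ᵥ v)) μ :=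
    (hx.eval i).integrable_mul (hy.dotProduct_const v)
  rw [dotProduct]
  simp only [covM_mulVec_apply hx hy, ← integral_const_mul]
  rw [← integral_finsetSum _ fun i _ => (hint i).const_mul (w i)]
  congr 1 with ω
  simp only [dotProduct, Finset.sum_mul]
  exact Finset.sum_congr rfl fun i _ => by ring

theorem covM_mulVec_eq_zero_of_mulVec_eq_zero (hx : MemLp x 2 μ) (hz : MemLp z 2 μ)
    {v : Fin n → ℝ} (hv : covM μ z z *ᵥ v = 0) : covM μ x z *ᵥ v = 0 := by
  have hsq : ∫ ω, (z ω ⬝ᵥ v) * (z ω ⬝ᵥ v) ∂μ = 0 := by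
    rw [← dotProduct_covM_mulVec hz hz, hv, dotProduct_zero]
  have hzv : ∀ᵐ ω ∂μ, z ω ⬝ᵥ v = 0 := by
    have hint := (hz.dotProduct_const v).integrable_mul (hz.dotProduct_const v)
    filter_upwards [(integral_eq_zero_iff_of_nonneg (fun ω => mul_self_nonneg _) hint).mp hsq]
      with ω hω
    exact mul_self_eq_zero.mp hω
  funext i
  rw [covM_mulVec_apply hx hz]
  exact integral_eq_zero_of_ae (by filter_upwards [hzv] with ω hω; simp [hω])

end Covariance

theorem stmt1_general {Ω : Type} [MeasurableSpace Ω] (μ : Measure Ω)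
    {m n : ℕ} (x : Ω → Fin m → ℝ) (z : Ω → Fin n → ℝ)
    (hx : MemLp x 2 μ) (hz : MemLp z 2 μ) :
    covM μ x z * mpinv (covM μ z z) * covM μ z z = covM μ x z :=
  mul_mul_eq_of_mulVec_eq_zero (covM_self_isHermitian μ z).isMoorePenrose_mpinv.1
    fun _ => covM_mulVec_eq_zero_of_mulVec_eq_zero hx hz

/-- `E_{xz} (E_{zz})^† E_{zz} = E_{xz}`. -/
theorem stmt1 {Ω : Type} [MeasurableSpace Ω] (μ : Measure Ω) [IsProbabilityMeasure μ]
    {m n : ℕ} (x : Ω → Fin m → ℝ) (z : Ω → Fin n → ℝ)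
    (hx : MemLp x 2 μ) (hz : MemLp z 2 μ) :
    covM μ x z * mpinv (covM μ z z) * covM μ z z = covM μ x z :=
  stmt1_general μ x z hx hz

end
end

section
/- Let x ∈ L²(Ω, ℝ^m) and let z_0, …, z_p be pairwise uncorrelated random vectors with z_j ∈ L²(Ω, ℝ^{q_j}) (i.e. E_{z_i z_j} = 0 for i ≠ j). Then for any matrices S_0, …, S_p with S_j ∈ ℝ^{m×q_j}: ‖x − Σ_{j=0}^p S_j z_j‖²_Ω = Σ_{j=0}^p ‖x − S_j z_j‖²_Ω − p · tr(E_{xx}). -/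
open MeasureTheory Matrix Finset Filter

noncomputable section

/-! Read in `EuclideanSpace`, square-integrable random vectors form the Hilbert space
`L²(Ω, ℝⁿ)`, where `⟪x, y⟫ = tr E_{xy}`. Since `E_{(S u)(T v)} = S E_{uv} Tᵀ`, the vectors
`S_j z_j` are pairwise orthogonal there, and the identity becomes the Hilbert-space fact
`‖x - ∑ f_j‖² = ∑ ‖x - f_j‖² - (n - 1) ‖x‖²` for `n` orthogonal vectors `f_j`: expand both sides
with `‖a - b‖² = ‖a‖² - 2⟪a, b⟫ + ‖b‖²` and use Pythagoras for `‖∑ f_j‖²`. -/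

open scoped InnerProductSpace

theorem norm_sub_sum_sq_of_pairwise_inner_eq_zero {E ι : Type*} [NormedAddCommGroup E]
    [InnerProductSpace ℝ E] [Fintype ι] (x : E) (f : ι → E)
    (hf : Pairwise fun i j => ⟪f i, f j⟫_ℝ = 0) :
    ‖x - ∑ i, f i‖ ^ 2 = ∑ i, ‖x - f i‖ ^ 2 - (Fintype.card ι - 1) * ‖x‖ ^ 2 := by
  classical
  have hpythagoras : ‖∑ i, f i‖ ^ 2 = ∑ i, ‖f i‖ ^ 2 := by
    simp_rw [← real_inner_self_eq_norm_sq, sum_inner, inner_sum]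
    exact Finset.sum_congr rfl fun i _ =>
      Finset.sum_eq_single i (fun j _ hji => hf hji.symm) (by simp)
  simp_rw [norm_sub_sq_real, hpythagoras, inner_sum, Finset.sum_add_distrib,
    Finset.sum_sub_distrib, ← Finset.mul_sum, Finset.sum_const, Finset.card_univ, nsmul_eq_mul]
  ring

theorem MeasureTheory.MemLp.toLp_finsetSum {α E ι : Type*} {m : MeasurableSpace α}
    {μ : Measure α} {p : ENNReal} [NormedAddCommGroup E] (s : Finset ι) {f : ι → α → E}
    (hf : ∀ i, MemLp (f i) p μ) :
    (memLp_finsetSum' s fun i _ => hf i).toLp (∑ i ∈ s, f i) = ∑ i ∈ s, (hf i).toLp (f i) := by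
  classical
  induction s using Finset.induction_on with
  | empty => simp [MemLp.toLp_zero]
  | insert i s hi ih => simp only [Finset.sum_insert hi, ← ih, ← MemLp.toLp_add]

section RandomVector

variable {Ω : Type} [MeasurableSpace Ω] {μ : Measure Ω} {n : ℕ}

-- `Fin n → ℝ` carries the sup norm; `EuclideanSpace` makes `L²` an inner product space.
abbrev toEuclideanFun (y : Ω → Fin n → ℝ) : Ω → EuclideanSpace ℝ (Fin n) :=
  fun ω => WithLp.toLp 2 (y ω)

theorem MeasureTheory.MemLp.toEuclideanFun {y : Ω → Fin n → ℝ} (hy : MemLp y 2 μ) :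
    MemLp (toEuclideanFun y) 2 μ :=
  MemLp.of_eval_piLp hy.eval

theorem MeasureTheory.MemLp.mulVec {m : ℕ} (S : Matrix (Fin m) (Fin n) ℝ)
    {u : Ω → Fin n → ℝ} (hu : MemLp u 2 μ) : MemLp (fun ω => S *ᵥ u ω) 2 μ :=
  (Matrix.toLin' S).toContinuousLinearMap.comp_memLp' hu

theorem MeasureTheory.MemLp.integrable_apply_mul_apply {k : ℕ} {u : Ω → Fin n → ℝ}
    {v : Ω → Fin k → ℝ} (hu : MemLp u 2 μ) (hv : MemLp v 2 μ) (a : Fin n) (b : Fin k) :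
    Integrable (fun ω => u ω a * v ω b) μ :=
  (hu.eval a).integrable_mul (hv.eval b)

theorem integral_dotProduct_eq_trace_covM {u v : Ω → Fin n → ℝ}
    (hu : MemLp u 2 μ) (hv : MemLp v 2 μ) :
    ∫ ω, u ω ⬝ᵥ v ω ∂μ = (covM μ u v).trace := by
  simp only [dotProduct, Matrix.trace, Matrix.diag, covM, Matrix.of_apply]
  exact integral_finsetSum _ fun i _ => hu.integrable_apply_mul_apply hv i i

theorem covM_mulVec_mulVec {m k l : ℕ} (S : Matrix (Fin m) (Fin n) ℝ)
    (T : Matrix (Fin k) (Fin l) ℝ) {u : Ω → Fin n → ℝ} {v : Ω → Fin l → ℝ}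
    (hu : MemLp u 2 μ) (hv : MemLp v 2 μ) :
    covM μ (fun ω => S *ᵥ u ω) (fun ω => T *ᵥ v ω) = S * covM μ u v * Tᵀ := by
  ext i j
  have hexpand : ∀ ω, (S *ᵥ u ω) i * (T *ᵥ v ω) j
      = ∑ a, ∑ b, S i a * T j b * (u ω a * v ω b) := by
    intro ω
    simp only [mulVec, dotProduct, Finset.sum_mul_sum]
    exact Finset.sum_congr rfl fun a _ => Finset.sum_congr rfl fun b _ => by ring
  have hint : ∀ a b, Integrable (fun ω => S i a * T j b * (u ω a * v ω b)) μ :=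
    fun a b => (hu.integrable_apply_mul_apply hv a b).const_mul _
  calc covM μ (fun ω => S *ᵥ u ω) (fun ω => T *ᵥ v ω) i j
      = ∑ a, ∑ b, S i a * T j b * ∫ ω, u ω a * v ω b ∂μ := by
        simp only [covM, Matrix.of_apply, hexpand]
        rw [integral_finsetSum _ fun a _ => integrable_finsetSum _ fun b _ => hint a b]
        refine Finset.sum_congr rfl fun a _ => ?_
        rw [integral_finsetSum _ fun b _ => hint a b]
        exact Finset.sum_congr rfl fun b _ => integral_const_mul _ _
    _ = (S * covM μ u v * Tᵀ) i j := by
        simp only [Matrix.mul_apply, Matrix.transpose_apply, covM, Matrix.of_apply,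
          Finset.sum_mul]
        rw [Finset.sum_comm]
        exact Finset.sum_congr rfl fun a _ => Finset.sum_congr rfl fun b _ => by ring

theorem inner_toLp_toEuclideanFun {u v : Ω → Fin n → ℝ} (hu : MemLp u 2 μ) (hv : MemLp v 2 μ) :
    ⟪hu.toEuclideanFun.toLp _, hv.toEuclideanFun.toLp _⟫_ℝ = (covM μ u v).trace := by
  rw [L2.inner_def, ← integral_dotProduct_eq_trace_covM hu hv]
  refine integral_congr_ae ?_
  filter_upwards [hu.toEuclideanFun.coeFn_toLp, hv.toEuclideanFun.coeFn_toLp] with ω hUω hVω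
  rw [hUω, hVω, EuclideanSpace.inner_toLp_toLp, dotProduct_comm]
  rfl

theorem sqnormOm_eq_norm_toLp_sq {y : Ω → Fin n → ℝ} (hy : MemLp y 2 μ) :
    sqnormOm μ y = ‖hy.toEuclideanFun.toLp _‖ ^ 2 := by
  rw [← real_inner_self_eq_norm_sq, inner_toLp_toEuclideanFun hy hy,
    ← integral_dotProduct_eq_trace_covM hy hy]
  simp only [sqnormOm, dotProduct, sq]

theorem sqnormOm_sub_eq_norm_toLp_sub_sq {y w : Ω → Fin n → ℝ} (hy : MemLp y 2 μ)
    (hw : MemLp w 2 μ) :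
    sqnormOm μ (fun ω => y ω - w ω)
      = ‖hy.toEuclideanFun.toLp _ - hw.toEuclideanFun.toLp _‖ ^ 2 := by
  rw [← MemLp.toLp_sub]
  exact sqnormOm_eq_norm_toLp_sq (hy.sub hw)

end RandomVector

theorem stmt3_general {Ω : Type} [MeasurableSpace Ω] (μ : Measure Ω)
    {m p : ℕ} (q : Fin (p + 1) → ℕ) (x : Ω → Fin m → ℝ)
    (z : ∀ j, Ω → Fin (q j) → ℝ)
    (hx : MemLp x 2 μ) (hz : ∀ j, MemLp (z j) 2 μ)
    (huncorr : ∀ i j, i ≠ j → covM μ (z i) (z j) = 0)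
    (S : ∀ j, Matrix (Fin m) (Fin (q j)) ℝ) :
    sqnormOm μ (fun ω => x ω - ∑ j, S j *ᵥ z j ω)
      = (∑ j, sqnormOm μ (fun ω => x ω - S j *ᵥ z j ω)) - p * (covM μ x x).trace := by
  have hf j := (hz j).mulVec (S j)
  set X := hx.toEuclideanFun.toLp _
  set F := fun j => (hf j).toEuclideanFun.toLp _
  have horth : Pairwise fun i j => ⟪F i, F j⟫_ℝ = 0 := fun i j hij => by
    simp only [F]
    rw [inner_toLp_toEuclideanFun (hf i) (hf j), covM_mulVec_mulVec _ _ (hz i) (hz j),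
      huncorr i j hij]
    simp
  have hsumLp : MemLp (fun ω => ∑ j, S j *ᵥ z j ω) 2 μ := memLp_finsetSum _ fun j _ => hf j
  have hsum : hsumLp.toEuclideanFun.toLp _ = ∑ j, F j := by
    rw [← MemLp.toLp_finsetSum]
    exact MemLp.toLp_congr _ _ (ae_of_all _ fun ω => by simp [toEuclideanFun])
  have htrace : (covM μ x x).trace = ‖X‖ ^ 2 := by
    rw [← real_inner_self_eq_norm_sq, inner_toLp_toEuclideanFun hx hx]
  rw [sqnormOm_sub_eq_norm_toLp_sub_sq hx hsumLp, hsum,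
    norm_sub_sum_sq_of_pairwise_inner_eq_zero X F horth, htrace, Fintype.card_fin]
  simp only [sqnormOm_sub_eq_norm_toLp_sub_sq hx (hf _)]
  push_cast
  ring

/-- for pairwise uncorrelated `z_0, …, z_p`,
`‖x − Σ_j S_j z_j‖²_Ω = Σ_j ‖x − S_j z_j‖²_Ω − p · tr(E_{xx})`. -/
theorem stmt3 {Ω : Type} [MeasurableSpace Ω] (μ : Measure Ω) [IsProbabilityMeasure μ]
    {m p : ℕ} (q : Fin (p + 1) → ℕ) (x : Ω → Fin m → ℝ)
    (z : ∀ j, Ω → Fin (q j) → ℝ)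
    (hx : MemLp x 2 μ) (hz : ∀ j, MemLp (z j) 2 μ)
    (huncorr : ∀ i j, i ≠ j → covM μ (z i) (z j) = 0)
    (S : ∀ j, Matrix (Fin m) (Fin (q j)) ℝ) :
    sqnormOm μ (fun ω => x ω - ∑ j, S j *ᵥ z j ω)
      = (∑ j, sqnormOm μ (fun ω => x ω - S j *ᵥ z j ω)) - p * (covM μ x x).trace :=
  stmt3_general μ q x z hx hz huncorr S

end
end

section
/- Let x ∈ L²(Ω, ℝ^m), let z_0, …, z_h be pairwise uncorrelated random vectors with z_j ∈ L²(Ω, ℝ^{q_j}), and set A_j = E_{x z_j}(E_{z_j z_j}^{1/2})^†. Then the minimal value of ‖x − Σ_{j=0}^{h} P_j z_j‖²_Ω over all P_j ∈ ℝ^{m×q_j} equals tr(E_{xx}) − Σ_{j=0}^{h} ‖A_j‖², where ‖·‖ is the Frobenius norm. -/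
open MeasureTheory Matrix Finset Filter

noncomputable section

/-!
Expanding the square and using that the `z_j` are uncorrelated, the error equals
`tr E_xx + Σ_j (tr (P_j E_{z_j z_j} P_jᵀ) - 2 tr (E_{x z_j} P_jᵀ))`. With `S_j = E_{z_j z_j}^{1/2}`
and `A_j S_j = E_{x z_j}`, the `j`-th summand is `‖P_j S_j - A_j‖² - ‖A_j‖²`, so the minimum is
attained at `P_j = A_j (S_j^†)ᵀ`. The identity `A_j S_j = E_{x z_j}` holds because
`E_{z_j z_j} v = 0` forces `v ⬝ z_j = 0` almost surely, so `E_{x z_j}` vanishes on the kernel of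
`E_{z_j z_j}`, which contains the range of `S_j^† S_j - 1`.
-/

section Covariance

variable {Ω : Type} [MeasurableSpace Ω] {μ : Measure Ω} {m n : ℕ}

lemma covM_transpose (f : Ω → Fin m → ℝ) (g : Ω → Fin n → ℝ) :
    (covM μ f g)ᵀ = covM μ g f := by
  ext i j
  simp only [covM, transpose_apply, of_apply, mul_comm]

lemma memLp_dotProduct {p : ENNReal} {f : Ω → Fin m → ℝ} (hf : MemLp f p μ) (v : Fin m → ℝ) :
    MemLp (fun ω => v ⬝ᵥ f ω) p μ :=
  memLp_finsetSum _ fun k _ => (hf.eval k).const_mul (v k)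

variable {f : Ω → Fin m → ℝ} {g : Ω → Fin n → ℝ}

lemma integrable_dotProduct_mul_dotProduct (hf : MemLp f 2 μ) (hg : MemLp g 2 μ)
    (v : Fin m → ℝ) (w : Fin n → ℝ) :
    Integrable (fun ω => (v ⬝ᵥ f ω) * (w ⬝ᵥ g ω)) μ :=
  (memLp_dotProduct hf v).integrable_mul (memLp_dotProduct hg w)

lemma integral_dotProduct_mul_dotProduct (hf : MemLp f 2 μ) (hg : MemLp g 2 μ)
    (v : Fin m → ℝ) (w : Fin n → ℝ) :
    ∫ ω, (v ⬝ᵥ f ω) * (w ⬝ᵥ g ω) ∂μ = v ⬝ᵥ (covM μ f g *ᵥ w) := by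
  have hint : ∀ k l, Integrable (fun ω => f ω k * g ω l) μ := fun k l =>
    (hf.eval k).integrable_mul (hg.eval l)
  calc ∫ ω, (v ⬝ᵥ f ω) * (w ⬝ᵥ g ω) ∂μ
      = ∫ ω, ∑ k, ∑ l, v k * w l * (f ω k * g ω l) ∂μ := by
        congr 1 with ω
        simp only [dotProduct, sum_mul_sum]
        exact sum_congr rfl fun k _ => sum_congr rfl fun l _ => by ring
    _ = ∑ k, ∑ l, v k * w l * covM μ f g k l := by
        rw [integral_finsetSum _ fun k _ => integrable_finsetSum _ fun l _ =>
          (hint k l).const_mul _]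
        refine sum_congr rfl fun k _ => ?_
        rw [integral_finsetSum _ fun l _ => (hint k l).const_mul _]
        exact sum_congr rfl fun l _ => integral_const_mul _ _
    _ = v ⬝ᵥ (covM μ f g *ᵥ w) := by
        simp only [dotProduct, mulVec, mul_sum]
        exact sum_congr rfl fun k _ => sum_congr rfl fun l _ => by ring

variable {c : ℕ}

lemma integrable_mulVec_dotProduct_mulVec (hf : MemLp f 2 μ) (hg : MemLp g 2 μ)
    (M : Matrix (Fin c) (Fin m) ℝ) (N : Matrix (Fin c) (Fin n) ℝ) :
    Integrable (fun ω => (M *ᵥ f ω) ⬝ᵥ (N *ᵥ g ω)) μ :=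
  integrable_finsetSum _ fun i _ => integrable_dotProduct_mul_dotProduct hf hg (M i) (N i)

lemma integral_mulVec_dotProduct_mulVec (hf : MemLp f 2 μ) (hg : MemLp g 2 μ)
    (M : Matrix (Fin c) (Fin m) ℝ) (N : Matrix (Fin c) (Fin n) ℝ) :
    ∫ ω, (M *ᵥ f ω) ⬝ᵥ (N *ᵥ g ω) ∂μ = (M * covM μ f g * Nᵀ).trace := by
  calc ∫ ω, (M *ᵥ f ω) ⬝ᵥ (N *ᵥ g ω) ∂μ
      = ∑ i, ∫ ω, (M i ⬝ᵥ f ω) * (N i ⬝ᵥ g ω) ∂μ :=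
        integral_finsetSum _ fun i _ => integrable_dotProduct_mul_dotProduct hf hg (M i) (N i)
    _ = ∑ i, M i ⬝ᵥ (covM μ f g *ᵥ N i) := by
        simp only [integral_dotProduct_mul_dotProduct hf hg]
    _ = (M * covM μ f g * Nᵀ).trace := by
        simp only [Matrix.trace, Matrix.diag, mul_apply, transpose_apply, dotProduct, mulVec,
          mul_sum, sum_mul]
        refine sum_congr rfl fun i _ => sum_comm.trans ?_
        exact sum_congr rfl fun l _ => sum_congr rfl fun k _ => by ring

lemma covM_posSemidef (hf : MemLp f 2 μ) : (covM μ f f).PosSemidef := by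
  refine PosSemidef.of_dotProduct_mulVec_nonneg (covM_transpose f f) fun v => ?_
  rw [star_trivial, ← integral_dotProduct_mul_dotProduct hf hf]
  exact integral_nonneg fun ω => mul_self_nonneg _

lemma ae_dotProduct_eq_zero_of_covM_mulVec_eq_zero (hf : MemLp f 2 μ) {v : Fin m → ℝ}
    (hv : covM μ f f *ᵥ v = 0) : ∀ᵐ ω ∂μ, v ⬝ᵥ f ω = 0 := by
  have hsq : ∫ ω, (v ⬝ᵥ f ω) * (v ⬝ᵥ f ω) ∂μ = 0 := by
    rw [integral_dotProduct_mul_dotProduct hf hf, hv, dotProduct_zero]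
  rw [integral_eq_zero_iff_of_nonneg (fun ω => mul_self_nonneg _)
    (integrable_dotProduct_mul_dotProduct hf hf v v)] at hsq
  filter_upwards [hsq] with ω hω
  exact mul_self_eq_zero.mp hω

lemma covM_mul_eq_zero_of_covM_self_mul_eq_zero {k : ℕ} (hf : MemLp f 2 μ) (hg : MemLp g 2 μ)
    {M : Matrix (Fin n) (Fin k) ℝ} (hM : covM μ g g * M = 0) : covM μ f g * M = 0 := by
  refine ext_iff_mulVec.mpr fun u => funext fun i => ?_
  have hv : covM μ g g *ᵥ (M *ᵥ u) = 0 := by rw [mulVec_mulVec, hM, zero_mulVec]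
  rw [← mulVec_mulVec, zero_mulVec, Pi.zero_apply,
    ← single_one_dotProduct i (covM μ f g *ᵥ (M *ᵥ u)), ← integral_dotProduct_mul_dotProduct hf hg]
  refine integral_eq_zero_of_ae ?_
  filter_upwards [ae_dotProduct_eq_zero_of_covM_mulVec_eq_zero hg hv] with ω hω
  rw [hω, mul_zero, Pi.zero_apply]

lemma covM_mul_mul_eq_of_isMoorePenrose (hf : MemLp f 2 μ) (hg : MemLp g 2 μ)
    {S B : Matrix (Fin n) (Fin n) ℝ} (hSS : S * S = covM μ g g) (hB : IsMoorePenrose S B) :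
    covM μ f g * B * S = covM μ f g := by
  have hker : covM μ g g * (B * S - 1) = 0 := by
    rw [← hSS, Matrix.mul_assoc, Matrix.mul_sub, ← Matrix.mul_assoc S B S, hB.1, Matrix.mul_one,
      sub_self, Matrix.mul_zero]
  have h := covM_mul_eq_zero_of_covM_self_mul_eq_zero hf hg hker
  rwa [Matrix.mul_sub, Matrix.mul_one, sub_eq_zero, ← Matrix.mul_assoc] at h

end Covariance

section MatrixFacts

variable {m n : ℕ}

lemma isMoorePenrose_cfc_inv {S : Matrix (Fin n) (Fin n) ℝ} (hS : S.IsHermitian) :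
    IsMoorePenrose S (cfc (fun t : ℝ => t⁻¹) S) := by
  have hmul : ∀ f g : ℝ → ℝ, cfc f S * cfc g S = cfc (fun t => f t * g t) S := fun f g =>
    (cfc_mul f g S (S.finite_real_spectrum.continuousOn f)
      (S.finite_real_spectrum.continuousOn g)).symm
  have hleft : ∀ g : ℝ → ℝ, S * cfc g S = cfc (fun t => t * g t) S := fun g => by
    have h := hmul id g
    rwa [cfc_id ℝ S] at h
  have hright : ∀ f : ℝ → ℝ, cfc f S * S = cfc (fun t => f t * t) S := fun f => by
    have h := hmul f id
    rwa [cfc_id ℝ S] at h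
  have htranspose : ∀ f : ℝ → ℝ, (cfc f S)ᵀ = cfc f S := fun f => by
    simpa [IsSelfAdjoint, star_eq_conjTranspose] using (cfc_predicate f S : IsSelfAdjoint _)
  refine ⟨?_, ?_, ?_, ?_⟩
  · rw [hleft, hright]
    conv_rhs => rw [← cfc_id' ℝ S]
    exact cfc_congr fun t _ => by by_cases ht : t = 0 <;> simp [ht]
  · rw [hright, hmul]
    exact cfc_congr fun t _ => by by_cases ht : t = 0 <;> simp [ht]
  · rw [hleft, htranspose]
  · rw [hright, htranspose]

lemma isMoorePenrose_mpinv_of_isHermitian {S : Matrix (Fin n) (Fin n) ℝ} (hS : S.IsHermitian) :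
    IsMoorePenrose S (mpinv S) :=
  Classical.epsilon_spec ⟨_, isMoorePenrose_cfc_inv hS⟩

lemma IsMoorePenrose.transpose_mul_eq_mul {S B : Matrix (Fin n) (Fin n) ℝ}
    (hB : IsMoorePenrose S B) (hS : Sᵀ = S) : Bᵀ * S = S * B := by
  rw [← hB.2.2.1, transpose_mul, hS]

open scoped MatrixOrder in
lemma msqrtM_spec {M : Matrix (Fin n) (Fin n) ℝ} (hM : M.PosSemidef) :
    (msqrtM M).PosSemidef ∧ msqrtM M * msqrtM M = M :=
  Classical.epsilon_spec (p := fun S => S.PosSemidef ∧ S * S = M)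
    ⟨CFC.sqrt M, (CFC.sqrt_nonneg M).posSemidef, CFC.sqrt_mul_sqrt_self M hM.nonneg⟩

lemma frobSq_eq_trace (A : Matrix (Fin m) (Fin n) ℝ) : frobSq A = (A * Aᵀ).trace := by
  simp only [frobSq, Matrix.trace, Matrix.diag, mul_apply, transpose_apply, sq]

lemma frobSq_nonneg (A : Matrix (Fin m) (Fin n) ℝ) : 0 ≤ frobSq A :=
  sum_nonneg fun _ _ => sum_nonneg fun _ _ => sq_nonneg _

lemma frobSq_sub (X Y : Matrix (Fin m) (Fin n) ℝ) :
    frobSq (X - Y) = frobSq X - 2 * (Y * Xᵀ).trace + frobSq Y := by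
  have hXY : (X * Yᵀ).trace = (Y * Xᵀ).trace := by
    rw [← trace_transpose, transpose_mul, transpose_transpose]
  rw [frobSq_eq_trace, frobSq_eq_trace, frobSq_eq_trace, transpose_sub, Matrix.sub_mul,
    Matrix.mul_sub, Matrix.mul_sub, trace_sub, trace_sub, trace_sub, hXY]
  ring

end MatrixFacts

section Regression

variable {Ω : Type} [MeasurableSpace Ω] {μ : Measure Ω} {m : ℕ} {ι : Type*} [Fintype ι]
  {q : ι → ℕ} {x : Ω → Fin m → ℝ} {z : ∀ j, Ω → Fin (q j) → ℝ}

lemma sum_sq_sub_sum_eq {n : ℕ} (a : Fin n → ℝ) (w : ι → Fin n → ℝ) :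
    ∑ i, (a - ∑ j, w j) i ^ 2
      = a ⬝ᵥ a - 2 * ∑ j, a ⬝ᵥ w j + ∑ j, ∑ k, w j ⬝ᵥ w k := by
  have hsq : ∑ i, (a - ∑ j, w j) i ^ 2 = (a - ∑ j, w j) ⬝ᵥ (a - ∑ j, w j) := by
    simp only [dotProduct, sq]
  rw [hsq, sub_dotProduct, dotProduct_sub, dotProduct_sub, dotProduct_comm (∑ j, w j) a,
    dotProduct_sum, sum_dotProduct]
  simp only [dotProduct_sum]
  ring

lemma sqnormOm_sub_sum_mulVec (hx : MemLp x 2 μ) (hz : ∀ j, MemLp (z j) 2 μ)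
    (P : ∀ j, Matrix (Fin m) (Fin (q j)) ℝ) :
    sqnormOm μ (fun ω => x ω - ∑ j, P j *ᵥ z j ω)
      = (covM μ x x).trace - 2 * ∑ j, (covM μ x (z j) * (P j)ᵀ).trace
        + ∑ j, ∑ k, (P j * covM μ (z j) (z k) * (P k)ᵀ).trace := by
  have hxx := integrable_mulVec_dotProduct_mulVec hx hx (1 : Matrix (Fin m) (Fin m) ℝ) 1
  have hxz := fun j =>
    integrable_mulVec_dotProduct_mulVec hx (hz j) (1 : Matrix (Fin m) (Fin m) ℝ) (P j)
  have hzz := fun j k => integrable_mulVec_dotProduct_mulVec (hz j) (hz k) (P j) (P k)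
  have hlin : Integrable (fun ω => (1 *ᵥ x ω) ⬝ᵥ (1 *ᵥ x ω)
      - 2 * ∑ j, (1 *ᵥ x ω) ⬝ᵥ (P j *ᵥ z j ω)) μ :=
    hxx.sub ((integrable_finsetSum _ fun j _ => hxz j).const_mul 2)
  have hquad : Integrable (fun ω => ∑ j, ∑ k, (P j *ᵥ z j ω) ⬝ᵥ (P k *ᵥ z k ω)) μ :=
    integrable_finsetSum _ fun j _ => integrable_finsetSum _ fun k _ => hzz j k
  have hpt : ∀ ω, ∑ i, (x ω - ∑ j, P j *ᵥ z j ω) i ^ 2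
      = (1 *ᵥ x ω) ⬝ᵥ (1 *ᵥ x ω) - 2 * ∑ j, (1 *ᵥ x ω) ⬝ᵥ (P j *ᵥ z j ω)
        + ∑ j, ∑ k, (P j *ᵥ z j ω) ⬝ᵥ (P k *ᵥ z k ω) := fun ω => by
    rw [one_mulVec, sum_sq_sub_sum_eq]
  rw [sqnormOm, integral_congr_ae (Eventually.of_forall hpt), integral_add hlin hquad,
    integral_sub hxx ((integrable_finsetSum _ fun j _ => hxz j).const_mul 2), integral_const_mul,
    integral_finsetSum _ fun j _ => hxz j,
    integral_finsetSum _ fun j _ => integrable_finsetSum _ fun k _ => hzz j k]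
  simp only [integral_finsetSum _ fun k _ => hzz _ k, integral_mulVec_dotProduct_mulVec hx hx,
    integral_mulVec_dotProduct_mulVec hx (hz _), integral_mulVec_dotProduct_mulVec (hz _) (hz _),
    Matrix.one_mul, transpose_one, Matrix.mul_one]

lemma sqnormOm_sub_sum_mulVec_of_uncorrelated (hx : MemLp x 2 μ) (hz : ∀ j, MemLp (z j) 2 μ)
    (huncorr : ∀ i j, i ≠ j → covM μ (z i) (z j) = 0)
    {S : ∀ j, Matrix (Fin (q j)) (Fin (q j)) ℝ} (hS : ∀ j, (S j)ᵀ = S j)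
    (hSS : ∀ j, S j * S j = covM μ (z j) (z j)) {A : ∀ j, Matrix (Fin m) (Fin (q j)) ℝ}
    (hAS : ∀ j, A j * S j = covM μ x (z j)) (P : ∀ j, Matrix (Fin m) (Fin (q j)) ℝ) :
    sqnormOm μ (fun ω => x ω - ∑ j, P j *ᵥ z j ω)
      = (covM μ x x).trace - ∑ j, frobSq (A j) + ∑ j, frobSq (P j * S j - A j) := by
  have hdiag : ∀ j, ∑ k, (P j * covM μ (z j) (z k) * (P k)ᵀ).trace
      = (P j * covM μ (z j) (z j) * (P j)ᵀ).trace := fun j =>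
    sum_eq_single j (fun k _ hkj => by
      rw [huncorr j k hkj.symm, Matrix.mul_zero, Matrix.zero_mul, trace_zero])
      (fun hj => absurd (mem_univ j) hj)
  have hsquare : ∀ j, frobSq (P j * S j - A j) = (P j * covM μ (z j) (z j) * (P j)ᵀ).trace
      - 2 * (covM μ x (z j) * (P j)ᵀ).trace + frobSq (A j) := fun j => by
    rw [frobSq_sub, frobSq_eq_trace (P j * S j), transpose_mul, hS, ← hSS, ← hAS]
    simp only [Matrix.mul_assoc]
  rw [sqnormOm_sub_sum_mulVec hx hz, sum_congr rfl fun j _ => hdiag j]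
  simp only [hsquare, sum_add_distrib, sum_sub_distrib, mul_sum]
  ring

end Regression

theorem stmt13_general {Ω : Type} [MeasurableSpace Ω] (μ : Measure Ω)
    {m h : ℕ} (q : Fin (h + 1) → ℕ) (x : Ω → Fin m → ℝ)
    (z : ∀ j, Ω → Fin (q j) → ℝ)
    (hx : MemLp x 2 μ) (hz : ∀ j, MemLp (z j) 2 μ)
    (huncorr : ∀ i j, i ≠ j → covM μ (z i) (z j) = 0)
    (A : ∀ j, Matrix (Fin m) (Fin (q j)) ℝ)
    (hA : ∀ j, A j = covM μ x (z j) * mpinv (msqrtM (covM μ (z j) (z j)))) :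
    IsLeast {c : ℝ | ∃ P : ∀ j, Matrix (Fin m) (Fin (q j)) ℝ,
        c = sqnormOm μ (fun ω => x ω - ∑ j, P j *ᵥ z j ω)}
      ((covM μ x x).trace - ∑ j, frobSq (A j)) := by
  set S := fun j => msqrtM (covM μ (z j) (z j))
  have hS : ∀ j, (S j).PosSemidef ∧ S j * S j = covM μ (z j) (z j) := fun j =>
    msqrtM_spec (covM_posSemidef (hz j))
  have hST : ∀ j, (S j)ᵀ = S j := fun j => by
    rw [← conjTranspose_eq_transpose_of_trivial]
    exact (hS j).1.1
  have hB : ∀ j, IsMoorePenrose (S j) (mpinv (S j)) := fun j =>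
    isMoorePenrose_mpinv_of_isHermitian (hS j).1.1
  have hAS : ∀ j, A j * S j = covM μ x (z j) := fun j => by
    rw [hA]
    exact covM_mul_mul_eq_of_isMoorePenrose hx (hz j) (hS j).2 (hB j)
  have hval := sqnormOm_sub_sum_mulVec_of_uncorrelated hx hz huncorr hST (fun j => (hS j).2) hAS
  refine ⟨⟨fun j => A j * (mpinv (S j))ᵀ, ?_⟩, ?_⟩
  · have hopt : ∀ j, A j * (mpinv (S j))ᵀ * S j = A j := fun j => by
      rw [Matrix.mul_assoc, (hB j).transpose_mul_eq_mul (hST j), hA, Matrix.mul_assoc,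
        ← Matrix.mul_assoc (mpinv (S j)), (hB j).2.1]
    simp [hval, hopt, frobSq]
  · rintro _ ⟨P, rfl⟩
    rw [hval]
    linarith [sum_nonneg fun j (_ : j ∈ univ) => frobSq_nonneg (P j * S j - A j)]

/-- the minimal value of `‖x − Σ_j P_j z_j‖²_Ω` over all `P_j`
equals `tr(E_{xx}) − Σ_j ‖A_j‖²` with `A_j = E_{xz_j}(E_{z_jz_j}^{1/2})^†`. -/
theorem stmt13 {Ω : Type} [MeasurableSpace Ω] (μ : Measure Ω) [IsProbabilityMeasure μ]
    {m h : ℕ} (q : Fin (h + 1) → ℕ) (x : Ω → Fin m → ℝ)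
    (z : ∀ j, Ω → Fin (q j) → ℝ)
    (hx : MemLp x 2 μ) (hz : ∀ j, MemLp (z j) 2 μ)
    (huncorr : ∀ i j, i ≠ j → covM μ (z i) (z j) = 0)
    (A : ∀ j, Matrix (Fin m) (Fin (q j)) ℝ)
    (hA : ∀ j, A j = covM μ x (z j) * mpinv (msqrtM (covM μ (z j) (z j)))) :
    IsLeast {c : ℝ | ∃ P : ∀ j, Matrix (Fin m) (Fin (q j)) ℝ,
        c = sqnormOm μ (fun ω => x ω - ∑ j, P j *ᵥ z j ω)}
      ((covM μ x x).trace - ∑ j, frobSq (A j)) :=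
  stmt13_general μ q x z hx hz huncorr A hA
end
end
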